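/- Let P ≥ 1 be a natural number and suppose β > 0 is chosen so that β² is a root of the Laguerre polynomial L_P, i.e. L_P(β²) = 0. Then the order-P amplification factor φ_P(z) = ∑_{p=0}^{P} L_p^{(−1)}(β²) (z/(z−β²))^p exhibits stiff decay: φ_P(z) → 0 as real z → −∞. Moreover the scheme is consistent of order P: φ_P(z) − e^{z} = O(z^{P+1}) as z → 0. -/

import Mathlib

/-!
Write `x = β²` and `d = z / (z - x)`. The generating function
`∑ₚ L_p^{(-1)}(x) tᵖ = exp (-x t / (1 - t))` equals `e^z` at `t = d`, so `φ_P` is a truncation of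
`e^z`. Concretely, `(z - x)ᴾ φ_P(z)` is the polynomial `∑ₚ L_p^{(-1)}(x) zᵖ (z - x)^{P-p}`, and an
upper Chu–Vandermonde identity shows that its coefficients of `z⁰, …, zᴾ` agree with those of
`(z - x)ᴾ eᶻ`; dividing by `(z - x)ᴾ`, which does not vanish at `0`, gives order `P`. As `z → -∞`
we have `d → 1`, and `φ_P → ∑_{p ≤ P} L_p^{(-1)}(x)`, which is `L_P(x) = 0` by the same identity.
-/

open Real Finset Filter Asymptotics

/-- The Laguerre polynomial `L_n(x) = ∑_{k=0}^n (-1)^k (n choose k) x^k / k!`. -/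
noncomputable def laguerre (n : ℕ) (x : ℝ) : ℝ :=
  ∑ k ∈ Finset.range (n + 1), (-1) ^ k * (n.choose k : ℝ) * x ^ k / (Nat.factorial k : ℝ)

/-- The generalized Laguerre polynomial of parameter `λ = -1`. -/
noncomputable def laguerreM1 : ℕ → ℝ → ℝ
  | 0, _ => 1
  | n + 1, x => ∑ k ∈ Finset.range (n + 2),
      (-1) ^ k * (n.choose (n + 1 - k) : ℝ) * x ^ k / (Nat.factorial k : ℝ)

open scoped Nat Topology

theorem Nat.sum_range_choose_mul_choose (n r s : ℕ) :
    ∑ j ∈ range (n + 1), j.choose r * (n - j).choose s = (n + 1).choose (r + s + 1) := by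
  induction n generalizing r with
  | zero => cases r <;> cases s <;> simp <;> exact (Nat.choose_eq_zero_of_lt (by omega)).symm
  | succ n ih =>
    rw [sum_range_succ']
    simp only [Nat.add_sub_add_right, Nat.sub_zero]
    cases r with
    | zero =>
      have h := ih 0
      simp only [Nat.choose_zero_right, one_mul, zero_add] at h ⊢
      rw [h, Nat.choose_succ_succ (n + 1) s, add_comm]
    | succ r =>
      have pascal (j : ℕ) : (j + 1).choose (r + 1) * (n - j).choose s =
          j.choose r * (n - j).choose s + j.choose (r + 1) * (n - j).choose s := by
        rw [Nat.choose_succ_succ, add_mul]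
      rw [sum_congr rfl fun j _ => pascal j, sum_add_distrib, ih, ih, Nat.choose_zero_succ,
        zero_mul, add_zero, show r + 1 + s + 1 = r + s + 1 + 1 by omega,
        Nat.choose_succ_succ (n + 1)]

theorem Nat.sum_Ico_choose_mul_choose {k m P : ℕ} (hkm : k < m) (hmP : m ≤ P) :
    ∑ q ∈ Ico k m, q.choose k * (P - (q + 1)).choose (m - (q + 1)) = P.choose (m - (k + 1)) := by
  have symm_on : ∀ q ∈ Ico k m, q.choose k * (P - (q + 1)).choose (m - (q + 1)) =
      q.choose k * (P - 1 - q).choose (P - m) := by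
    intro q hq
    rw [mem_Ico] at hq
    rw [show P - (q + 1) = P - 1 - q by omega,
      Nat.choose_symm_of_eq_add (by omega : P - 1 - q = m - (q + 1) + (P - m))]
  -- In this form the terms with `q ≥ m` vanish, so the range can be extended; in the original
  -- form they would not, since the truncated `m - (q + 1)` is `0` there.
  have extend : ∑ q ∈ Ico k m, q.choose k * (P - 1 - q).choose (P - m) =
      ∑ q ∈ range (P - 1 + 1), q.choose k * (P - 1 - q).choose (P - m) := by
    refine sum_subset (fun q hq => by simp only [mem_Ico, mem_range] at *; omega) ?_
    intro q hq hq'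
    simp only [mem_Ico, mem_range, not_and_or, not_le, not_lt] at hq hq'
    rcases hq' with hqk | hmq
    · rw [Nat.choose_eq_zero_of_lt hqk, zero_mul]
    · rw [Nat.choose_eq_zero_of_lt (by omega : P - 1 - q < P - m), mul_zero]
  rw [sum_congr rfl symm_on, extend, Nat.sum_range_choose_mul_choose,
    Nat.sub_add_cancel (by omega), ← Nat.choose_symm (by omega)]
  congr 1
  omega

theorem laguerreM1_succ (n : ℕ) (x : ℝ) :
    laguerreM1 (n + 1) x = ∑ k ∈ range (n + 1), n.choose k * (-x) ^ (k + 1) / (k + 1)! := by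
  rw [laguerreM1, sum_range_succ', Nat.choose_eq_zero_of_lt (by omega : n < n + 1 - 0)]
  simp only [Nat.cast_zero, mul_zero, zero_mul, zero_div, add_zero]
  refine sum_congr rfl fun k hk => ?_
  rw [Nat.add_sub_add_right, Nat.choose_symm (by simpa [Nat.lt_succ_iff] using hk), neg_pow]
  ring

theorem sum_range_laguerreM1_mul_choose {m P : ℕ} (hmP : m ≤ P) (x : ℝ) :
    ∑ p ∈ range (m + 1), laguerreM1 p x * (P - p).choose (m - p) =
      ∑ k ∈ range (m + 1), (-x) ^ k / k ! * P.choose (m - k) := by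
  rw [sum_range_succ', sum_range_succ']
  congr 1
  · simp only [laguerreM1_succ, sum_mul, range_eq_Ico]
    rw [← sum_Ico_Ico_comm]
    refine sum_congr rfl fun k hk => ?_
    rw [mem_Ico] at hk
    rw [← Nat.sum_Ico_choose_mul_choose hk.2 hmP, Nat.cast_sum, mul_sum]
    refine sum_congr rfl fun q _ => ?_
    push_cast
    ring
  · simp [laguerreM1]

theorem sum_range_laguerreM1 (n : ℕ) (x : ℝ) :
    ∑ p ∈ range (n + 1), laguerreM1 p x = laguerre n x := by
  have h := sum_range_laguerreM1_mul_choose (le_refl n) x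
  simp only [Nat.choose_self, Nat.cast_one, mul_one] at h
  rw [h, laguerre]
  refine sum_congr rfl fun k hk => ?_
  rw [Nat.choose_symm (by simpa [Nat.lt_succ_iff] using hk), neg_pow]
  ring

noncomputable def amplificationFactor (P : ℕ) (x z : ℝ) : ℝ :=
  ∑ p ∈ range (P + 1), laguerreM1 p x * (z / (z - x)) ^ p

theorem tendsto_amplificationFactor_atBot {P : ℕ} {x : ℝ} (hroot : laguerre P x = 0) :
    Tendsto (amplificationFactor P x) atBot (𝓝 0) := by
  have hd : Tendsto (fun z : ℝ => z / (z - x)) atBot (𝓝 1) := by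
    have h := (tendsto_const_nhds (x := x)).div_atBot
      (tendsto_atBot_add_const_right _ (-x) tendsto_id)
    rw [← add_zero (1 : ℝ)]
    refine (tendsto_const_nhds.add h).congr' ?_
    filter_upwards [eventually_lt_atBot x] with z hz
    have : z - x ≠ 0 := sub_ne_zero.mpr hz.ne
    simp only [id, ← sub_eq_add_neg]
    field_simp
    ring
  have hφ : Continuous fun t : ℝ => ∑ p ∈ range (P + 1), laguerreM1 p x * t ^ p := by fun_prop
  have h := (hφ.tendsto 1).comp hd
  simp only [one_pow, mul_one, sum_range_laguerreM1, hroot] at h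
  exact h

namespace Polynomial

variable {R : Type*} [CommRing R]

theorem coeff_C_mul_X_pow_mul_X_sub_C_pow (a x : R) (p k m : ℕ) :
    (C a * X ^ p * (X - C x) ^ k).coeff m =
      if p ≤ m then a * (-x) ^ (k - (m - p)) * k.choose (m - p) else 0 := by
  rw [mul_assoc, coeff_C_mul, coeff_X_pow_mul', sub_eq_add_neg, ← C_neg]
  split_ifs
  · rw [coeff_X_add_C_pow, mul_assoc]
  · rw [mul_zero]

theorem coeff_sum_C_mul_X_pow_mul_X_sub_C_pow (a : ℕ → R) (k : ℕ → ℕ) (x : R) {m P : ℕ}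
    (hmP : m ≤ P) :
    (∑ p ∈ range (P + 1), C (a p) * X ^ p * (X - C x) ^ k p).coeff m =
      ∑ p ∈ range (m + 1), a p * (-x) ^ (k p - (m - p)) * (k p).choose (m - p) := by
  simp only [finsetSum_coeff, coeff_C_mul_X_pow_mul_X_sub_C_pow]
  rw [← sum_filter, show {p ∈ range (P + 1) | p ≤ m} = range (m + 1) by ext; simp; omega]

variable {𝕜 : Type*} [NormedField 𝕜]

theorem isBigO_eval_div_sub_eval {p d q : 𝕜[X]} {n : ℕ} (hd : d.eval 0 ≠ 0)
    (hdvd : X ^ n ∣ p - d * q) :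
    (fun z => p.eval z / d.eval z - q.eval z) =O[𝓝 0] (· ^ n) := by
  obtain ⟨r, hr⟩ := hdvd
  have hquot : (fun z => p.eval z / d.eval z - q.eval z) =ᶠ[𝓝 0]
      fun z => r.eval z / d.eval z * z ^ n := by
    filter_upwards [d.continuous.continuousAt.eventually_ne hd] with z hz
    have h := congrArg (eval z) hr
    simp only [eval_sub, eval_mul, eval_pow, eval_X] at h
    field_simp
    linear_combination h
  have hbounded : (fun z => r.eval z / d.eval z) =O[𝓝 0] (fun _ => (1 : 𝕜)) :=
    ((r.continuous.tendsto 0).div (d.continuous.tendsto 0) hd).isBigO_one 𝕜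
  simpa using (hbounded.mul (isBigO_refl (· ^ n) _)).congr' hquot.symm EventuallyEq.rfl

end Polynomial

open Polynomial

noncomputable def amplificationNumerator (P : ℕ) (x : ℝ) : ℝ[X] :=
  ∑ p ∈ range (P + 1), C (laguerreM1 p x) * X ^ p * (X - C x) ^ (P - p)

theorem amplificationFactor_eq_eval_div {x z : ℝ} (hzx : z ≠ x) (P : ℕ) :
    amplificationFactor P x z = (amplificationNumerator P x).eval z / (z - x) ^ P := by
  have hzx : z - x ≠ 0 := sub_ne_zero.mpr hzx
  rw [amplificationFactor, amplificationNumerator, eval_finsetSum, sum_div]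
  refine sum_congr rfl fun p hp => ?_
  rw [← Nat.add_sub_of_le (Nat.lt_succ_iff.mp (mem_range.mp hp)), pow_add]
  simp only [eval_mul, eval_C, eval_pow, eval_X, eval_sub, Nat.add_sub_cancel_left]
  rw [div_pow]
  field_simp

theorem X_pow_dvd_amplificationNumerator_sub (P : ℕ) (x : ℝ) :
    X ^ (P + 1) ∣
      amplificationNumerator P x - (X - C x) ^ P * ∑ n ∈ range (P + 1), C (n ! : ℝ)⁻¹ * X ^ n := by
  rw [X_pow_dvd_iff]
  intro m hm
  have hmP : m ≤ P := Nat.lt_succ_iff.mp hm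
  have hexp : (X - C x) ^ P * ∑ n ∈ range (P + 1), C (n ! : ℝ)⁻¹ * X ^ n =
      ∑ n ∈ range (P + 1), C (n ! : ℝ)⁻¹ * X ^ n * (X - C x) ^ P := by
    rw [mul_sum]
    exact sum_congr rfl fun _ _ => mul_comm _ _
  rw [coeff_sub, sub_eq_zero, amplificationNumerator, hexp,
    coeff_sum_C_mul_X_pow_mul_X_sub_C_pow _ _ _ hmP,
    coeff_sum_C_mul_X_pow_mul_X_sub_C_pow _ _ _ hmP]
  have hlhs :
      ∑ p ∈ range (m + 1), laguerreM1 p x * (-x) ^ (P - p - (m - p)) * (P - p).choose (m - p) =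
        (-x) ^ (P - m) * ∑ p ∈ range (m + 1), laguerreM1 p x * (P - p).choose (m - p) := by
    rw [mul_sum]
    refine sum_congr rfl fun p hp => ?_
    rw [show P - p - (m - p) = P - m by have := mem_range.mp hp; omega]
    ring
  have hrhs : ∑ n ∈ range (m + 1), (n ! : ℝ)⁻¹ * (-x) ^ (P - (m - n)) * P.choose (m - n) =
      (-x) ^ (P - m) * ∑ n ∈ range (m + 1), (-x) ^ n / n ! * P.choose (m - n) := by
    rw [mul_sum]
    refine sum_congr rfl fun n hn => ?_
    rw [show P - (m - n) = P - m + n by have := mem_range.mp hn; omega, pow_add]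
    ring
  rw [hlhs, hrhs, sum_range_laguerreM1_mul_choose hmP]

theorem amplificationFactor_sub_exp_isBigO (P : ℕ) {x : ℝ} (hx : x ≠ 0) :
    (fun z => amplificationFactor P x z - exp z) =O[𝓝 0] (· ^ (P + 1)) := by
  have hrational :=
    isBigO_eval_div_sub_eval (by simp [hx]) (X_pow_dvd_amplificationNumerator_sub P x)
  refine (hrational.sub (exp_sub_sum_range_isBigO_pow (P + 1))).congr' ?_ EventuallyEq.rfl
  filter_upwards [eventually_ne_nhds hx.symm] with z hz
  simp only [amplificationFactor_eq_eval_div hz, eval_pow, eval_sub, eval_X, eval_C,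
    eval_finsetSum, eval_mul, div_eq_inv_mul]
  ring

theorem stiff_decay_and_order_P_general (P : ℕ) (β : ℝ) (hβ : 0 < β)
    (hroot : laguerre P (β ^ 2) = 0) :
    Filter.Tendsto
      (fun z : ℝ => ∑ p ∈ Finset.range (P + 1),
        laguerreM1 p (β ^ 2) * (z / (z - β ^ 2)) ^ p)
      Filter.atBot (nhds 0) ∧
    (fun z : ℝ => (∑ p ∈ Finset.range (P + 1),
        laguerreM1 p (β ^ 2) * (z / (z - β ^ 2)) ^ p) - Real.exp z)
      =O[nhds 0] fun z : ℝ => z ^ (P + 1) :=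
  ⟨tendsto_amplificationFactor_atBot hroot,
    amplificationFactor_sub_exp_isBigO P (pow_ne_zero 2 hβ.ne')⟩

/-- If `β²` is a root of the Laguerre polynomial `L_P`, then the order-`P`
amplification factor exhibits stiff decay (`φ_P(z) → 0` as real `z → -∞`) and
is consistent of order `P` (`φ_P(z) - e^z = O(z^{P+1})` as `z → 0`). -/
theorem stiff_decay_and_order_P (P : ℕ) (hP : 1 ≤ P) (β : ℝ) (hβ : 0 < β)
    (hroot : laguerre P (β ^ 2) = 0) :
    Filter.Tendsto
      (fun z : ℝ => ∑ p ∈ Finset.range (P + 1),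
        laguerreM1 p (β ^ 2) * (z / (z - β ^ 2)) ^ p)
      Filter.atBot (nhds 0) ∧
    (fun z : ℝ => (∑ p ∈ Finset.range (P + 1),
        laguerreM1 p (β ^ 2) * (z / (z - β ^ 2)) ^ p) - Real.exp z)
      =O[nhds 0] fun z : ℝ => z ^ (P + 1) :=
  stiff_decay_and_order_P_general P β hβ hroot
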